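/- The residual residual₀(D) = reach(D ↾ Σ(P^S_Σ ⇓ OId)) of a DATE D, obtained by restricting D to the events appearing in the static program and then applying the reachability reduction, is equivalent to D with respect to the static program: residual₀(D) ≅_{P^S_Σ} D. -/

import Mathlib

open Classical

/-- A property automaton over states `Q` and alphabet `E`: a deterministic and
total transition relation is represented as a transition function. -/
structure PA (Q : Type*) (E : Type*) where
  init : Q
  bad : Set Q
  next : Q → E → Q

namespace PA

variable {Q E : Type*}

/-- Iterated application of the transition function along a ground trace. -/
def run (π : PA Q E) (q : Q) (t : List E) : Q := t.foldl π.next q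

/-- A ground trace satisfies a property automaton iff no prefix of it leads
from the initial state to a bad state. -/
def Sat (t : List E) (π : PA Q E) : Prop :=
  ∀ t' : List E, t' <+: t → π.run π.init t' ∉ π.bad

/-- Equivalence of two property automata with respect to a set of ground traces. -/
def EquivOn (T : Set (List E)) (π π' : PA Q E) : Prop :=
  ∀ t ∈ T, Sat t π ↔ Sat t π'

end PA

/-- A static program: a set of static parametrised traces over identifiers `α`,
together with a must-alias equivalence relation and a may-alias relation. -/
structure SProg (α : Type*) (E : Type*) where
  traces : Set (List (α × E))
  must : α → α → Prop
  may : α → α → Prop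
  must_equiv : Equivalence must
  must_sub_may : ∀ {x y : α}, must x y → may x y

namespace SProg

variable {α E : Type*}

-- Projection of a static parametrised trace onto an identifier `x`,
-- yielding the set of possible ground traces.
open Classical in
noncomputable def proj (P : SProg α E) (x : α) : List (α × E) → Set (List E)
  | [] => {[]}
  | (x', e) :: st =>
      if P.must x x' then (e :: ·) '' P.proj x st
      else if P.may x x' then P.proj x st ∪ (e :: ·) '' P.proj x st
      else P.proj x st

/-- The projection of a static program onto a single identifier. -/
def projId (P : SProg α E) (x : α) : Set (List E) :=
  {t | ∃ st ∈ P.traces, t ∈ P.proj x st}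

/-- The projection of a static program onto all identifiers (`P ⇓ OId`). -/
def projAll (P : SProg α E) : Set (List E) :=
  {t | ∃ st ∈ P.traces, ∃ x : α, t ∈ P.proj x st}

end SProg

/-- Satisfaction of a property automaton by a static parametrised trace:
every projection onto every identifier satisfies the automaton. -/
def PA.SSat {α Q E : Type*} (P : SProg α E) (st : List (α × E)) (π : PA Q E) : Prop :=
  ∀ x : α, ∀ t ∈ P.proj x st, PA.Sat t π

/-- Equivalence of two property automata with respect to a static program. -/
def PA.SEquiv {α Q E : Type*} (P : SProg α E) (π π' : PA Q E) : Prop :=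
  ∀ st ∈ P.traces, PA.SSat P st π ↔ PA.SSat P st π'

/-- A transition of a DATE: source state, event, condition, action, target state. -/
structure DTrans (Q : Type*) (E : Type*) (Θ : Type*) where
  src : Q
  ev : E
  cond : Θ → Bool
  act : Θ → Θ
  tgt : Q

/-- A DATE (without timers/channels): states `Q`, events `E`, monitoring
variable states `Θ`, initial state, initial monitoring state, bad states,
and a transition relation. -/
structure DATE (Q : Type*) (E : Type*) (Θ : Type*) where
  init : Q
  th0 : Θ
  bad : Set Q
  delta : Set (DTrans Q E Θ)

namespace DATE

variable {Q E Θ : Type*}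

/-- Determinism: from each state, any two distinct transitions with the same
event have conditions that are never simultaneously true. -/
def Deterministic (D : DATE Q E Θ) : Prop :=
  ∀ d ∈ D.delta, ∀ d' ∈ D.delta,
    d.src = d'.src → d.ev = d'.ev → d ≠ d' →
      ∀ θ : Θ, ¬(d.cond θ = true ∧ d'.cond θ = true)

/-- The concrete transition function `Δ`. -/
noncomputable def step (D : DATE Q E Θ) (s : Q × Θ) (e : E) : Q × Θ :=
  if h : ∃ d ∈ D.delta, d.src = s.1 ∧ d.ev = e ∧ d.cond s.2 = true
  then (h.choose.tgt, h.choose.act s.2)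
  else s

/-- `Δ*`: iterated concrete transition function along a ground trace. -/
noncomputable def run (D : DATE Q E Θ) (s : Q × Θ) (t : List E) : Q × Θ :=
  t.foldl D.step s

/-- A ground trace satisfies a DATE iff no prefix of it drives `Δ*` from the
initial configuration into a bad state. -/
def Sat (t : List E) (D : DATE Q E Θ) : Prop :=
  ∀ t' : List E, t' <+: t → (D.run (D.init, D.th0) t').1 ∉ D.bad

/-- Equivalence of two DATEs with respect to a set of ground traces. -/
def EquivOn (T : Set (List E)) (D D' : DATE Q E Θ) : Prop :=
  ∀ t ∈ T, Sat t D ↔ Sat t D'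

/-- The static transition relation `q →e_approx q'`. -/
def ApproxStep (D : DATE Q E Θ) (q : Q) (e : E) (q' : Q) : Prop :=
  (∃ d ∈ D.delta, d.src = q ∧ d.ev = e ∧ d.tgt = q' ∧ ¬ ∀ θ : Θ, d.cond θ = false)
  ∨ (q' = q ∧ ¬ ∃ d ∈ D.delta, d.src = q ∧ d.ev = e ∧ d.tgt ≠ q ∧ ∀ θ : Θ, d.cond θ = true)

/-- The static transition function on sets of states. -/
def approxSet (D : DATE Q E Θ) (S : Set Q) (e : E) : Set Q :=
  {q' | ∃ q ∈ S, D.ApproxStep q e q'}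

/-- `approxΔ*`: iterated static transition function along a ground trace. -/
def approxRun (D : DATE Q E Θ) (S : Set Q) (t : List E) : Set Q :=
  t.foldl D.approxSet S

/-- `q ↪ q'`: `q'` is reachable from `q` via the static transition relation. -/
def Reach (D : DATE Q E Θ) (q q' : Q) : Prop :=
  ∃ t : List E, q' ∈ D.approxRun {q} t

/-- `badAfter(q)`: `q` is reachable from the initial state and can reach a bad state. -/
def BadAfter (D : DATE Q E Θ) (q : Q) : Prop :=
  D.Reach D.init q ∧ ∃ q' ∈ D.bad, D.Reach q q'

/-- `goodEntryPoint(q)`. -/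
def GoodEntryPoint (D : DATE Q E Θ) (q : Q) : Prop :=
  ¬ D.BadAfter q ∧ ∃ q' : Q, ∃ e : E, D.BadAfter q' ∧ D.ApproxStep q' e q

/-- `useful(q)`. -/
def Useful (D : DATE Q E Θ) (q : Q) : Prop :=
  D.BadAfter q ∨ D.GoodEntryPoint q

/-- Restriction of a DATE to a set of transitions (`D ↾ δ'`). -/
def restrict (D : DATE Q E Θ) (δ' : Set (DTrans Q E Θ)) : DATE Q E Θ :=
  { D with delta := D.delta ∩ δ' }

/-- The reachability-reduced DATE `reach(D)`: only useful states and
transitions between useful states are kept. -/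
def reachReduce (D : DATE Q E Θ) : DATE Q E Θ :=
  D.restrict {d | D.Useful d.src ∧ D.Useful d.tgt}

/-- Alphabet restriction `D ↾ Σ'`. -/
def alphaRestrict (D : DATE Q E Θ) (A : Set E) : DATE Q E Θ :=
  D.restrict {d | d.ev ∈ A}

/-- `Σ(T)`: the set of events occurring in some trace of `T`. -/
def eventsOf (T : Set (List E)) : Set E :=
  {e | ∃ t ∈ T, e ∈ t}

/-- Component-wise union of two DATEs (sharing initial state and initial
monitoring state). -/
def union (D₁ D₂ : DATE Q E Θ) : DATE Q E Θ :=
  { init := D₁.init, th0 := D₁.th0, bad := D₁.bad ∪ D₂.bad,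
    delta := D₁.delta ∪ D₂.delta }

/-- Component-wise union of a family of DATEs, with given initial state and
initial monitoring state. -/
def unionFamily {ι : Type*} (q0 : Q) (θ0 : Θ) (f : ι → DATE Q E Θ) : DATE Q E Θ :=
  { init := q0, th0 := θ0, bad := ⋃ i, (f i).bad, delta := ⋃ i, (f i).delta }

/-- A ground trace `t` uses a transition `d`. -/
def Uses (D : DATE Q E Θ) (t : List E) (d : DTrans Q E Θ) : Prop :=
  (¬ ∀ θ : Θ, d.cond θ = false) ∧
    ∃ t' : List E, (t' ++ [d.ev]) <+: t ∧ d.src ∈ D.approxRun {D.init} t'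

/-- Satisfaction of a DATE by a static parametrised trace. -/
def SSat {α : Type*} (P : SProg α E) (st : List (α × E)) (D : DATE Q E Θ) : Prop :=
  ∀ x : α, ∀ t ∈ P.proj x st, Sat t D

/-- Equivalence of two DATEs with respect to a static program. -/
def SEquiv {α : Type*} (P : SProg α E) (D D' : DATE Q E Θ) : Prop :=
  ∀ st ∈ P.traces, SSat P st D ↔ SSat P st D'

end DATE

/-- Translation of a property automaton into a DATE with `Θ = Unit`:
each transition `(q, e, q')` becomes `q —e|true↦skip→ q'`. -/
def PA.toDATE {Q E : Type*} (π : PA Q E) : DATE Q E Unit :=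
  { init := π.init, th0 := (), bad := π.bad,
    delta := {d | d.cond = (fun _ => true) ∧ d.act = id ∧ d.tgt = π.next d.src d.ev} }

/-- The flow-sensitive residual `residual₂(D, P)`. -/
def DATE.residual2 {α Q E Θ : Type*} (D : DATE Q E Θ) (P : SProg α E) : DATE Q E Θ :=
  (D.restrict {d | ∃ t ∈ P.projAll, D.Uses t d}).reachReduce

/-- Consecutive application of the flow-sensitive residual over a list of
static program over-approximations. -/
def DATE.residual2List {α Q E Θ : Type*} (D : DATE Q E Θ) :
    List (SProg α E) → DATE Q E Θ
  | [] => D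
  | P :: Ps => DATE.residual2List (D.residual2 P) Ps


/-! The projections of the static program only contain events of `Σ(P ⇓ OId)`, and on such
traces `D ↾ Σ` steps exactly like `D`: by determinism the enabled transition is unique, and the
restriction keeps it. For `reach(D)`, the runs from the initial configuration coincide as long as
the current state is `badAfter`, because every transition leaving a `badAfter` state ends in a
useful state. Once the run of `D` reaches a state from which no bad state is statically reachable,
both runs, being over-approximated by the static transition relation of `D`, avoid the bad states
for good. -/

namespace DATE

variable {Q E Θ : Type*}

theorem Deterministic.restrict {D : DATE Q E Θ} (hdet : D.Deterministic)
    (S : Set (DTrans Q E Θ)) : (D.restrict S).Deterministic :=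
  fun d hd d' hd' => hdet d hd.1 d' hd'.1

theorem Deterministic.eq_of_enabled {D : DATE Q E Θ} (hdet : D.Deterministic)
    {d d' : DTrans Q E Θ} {q : Q} {e : E} {θ : Θ} (hd : d ∈ D.delta) (hd' : d' ∈ D.delta)
    (h : d.src = q ∧ d.ev = e ∧ d.cond θ = true)
    (h' : d'.src = q ∧ d'.ev = e ∧ d'.cond θ = true) : d = d' := by
  by_contra hne
  exact hdet d hd d' hd' (h.1.trans h'.1.symm) (h.2.1.trans h'.2.1.symm) hne θ ⟨h.2.2, h'.2.2⟩

theorem step_restrict_eq {D : DATE Q E Θ} (hdet : D.Deterministic) {S : Set (DTrans Q E Θ)}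
    {s : Q × Θ} {e : E}
    (hS : ∀ d ∈ D.delta, d.src = s.1 → d.ev = e → d.cond s.2 = true → d ∈ S) :
    (D.restrict S).step s e = D.step s e := by
  unfold step
  by_cases h : ∃ d ∈ D.delta, d.src = s.1 ∧ d.ev = e ∧ d.cond s.2 = true
  · have h' : ∃ d ∈ (D.restrict S).delta, d.src = s.1 ∧ d.ev = e ∧ d.cond s.2 = true :=
      let ⟨d, hd, hsd⟩ := h
      ⟨d, ⟨hd, hS d hd hsd.1 hsd.2.1 hsd.2.2⟩, hsd⟩
    have hchoose : h'.choose = h.choose :=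
      hdet.eq_of_enabled h'.choose_spec.1.1 h.choose_spec.1 h'.choose_spec.2 h.choose_spec.2
    rw [dif_pos h', dif_pos h, hchoose]
  · have h' : ¬ ∃ d ∈ (D.restrict S).delta, d.src = s.1 ∧ d.ev = e ∧ d.cond s.2 = true :=
      fun ⟨d, hd, hsd⟩ => h ⟨d, hd.1, hsd⟩
    rw [dif_neg h', dif_neg h]

theorem sat_restrict_iff {D : DATE Q E Θ} {S : Set (DTrans Q E Θ)} {t : List E}
    (h : ∀ t' : List E, t' <+: t →
      (((D.restrict S).run (D.init, D.th0) t').1 ∈ D.bad ↔ (D.run (D.init, D.th0) t').1 ∈ D.bad)) :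
    Sat t (D.restrict S) ↔ Sat t D :=
  forall_congr' fun t' => forall_congr' fun ht' => not_congr (h t' ht')

theorem run_alphaRestrict {D : DATE Q E Θ} (hdet : D.Deterministic) {A : Set E} {t : List E}
    (hA : ∀ e ∈ t, e ∈ A) (s : Q × Θ) : (D.alphaRestrict A).run s t = D.run s t := by
  induction t generalizing s with
  | nil => rfl
  | cons e t ih =>
    have hstep : (D.alphaRestrict A).step s e = D.step s e :=
      step_restrict_eq hdet fun d _ _ hev _ => show d.ev ∈ A from hev ▸ hA e List.mem_cons_self
    exact (congrArg (fun s' => (D.alphaRestrict A).run s' t) hstep).trans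
      (ih (fun e' he' => hA e' (List.mem_cons_of_mem e he')) _)

theorem sat_alphaRestrict_iff {D : DATE Q E Θ} (hdet : D.Deterministic) {A : Set E}
    {t : List E} (hA : ∀ e ∈ t, e ∈ A) : Sat t (D.alphaRestrict A) ↔ Sat t D :=
  sat_restrict_iff fun t' ht' => by
    rw [← alphaRestrict, run_alphaRestrict hdet fun e he => hA e (ht'.sublist.mem he)]

theorem reach_refl (D : DATE Q E Θ) (q : Q) : D.Reach q q := ⟨[], rfl⟩

theorem approxRun_mono (D : DATE Q E Θ) {S S' : Set Q} (h : S ⊆ S') (t : List E) :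
    D.approxRun S t ⊆ D.approxRun S' t := by
  induction t generalizing S S' with
  | nil => exact h
  | cons e t ih => exact ih fun q' ⟨q, hq, hstep⟩ => ⟨q, h hq, hstep⟩

theorem reach_trans {D : DATE Q E Θ} {q q' q'' : Q} (h₁ : D.Reach q q') (h₂ : D.Reach q' q'') :
    D.Reach q q'' := by
  obtain ⟨t₁, h₁⟩ := h₁
  obtain ⟨t₂, h₂⟩ := h₂
  refine ⟨t₁ ++ t₂, ?_⟩
  rw [approxRun, List.foldl_append]
  exact approxRun_mono D (Set.singleton_subset_iff.mpr h₁) t₂ h₂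

theorem reach_of_approxStep {D : DATE Q E Θ} {q q' : Q} {e : E} (h : D.ApproxStep q e q') :
    D.Reach q q' :=
  ⟨[e], q, rfl, h⟩

theorem approxStep_of_enabled {D : DATE Q E Θ} {d : DTrans Q E Θ} {θ : Θ} (hd : d ∈ D.delta)
    (hcond : d.cond θ = true) : D.ApproxStep d.src d.ev d.tgt :=
  Or.inl ⟨d, hd, rfl, rfl, rfl, fun hfalse => by simp [hfalse θ] at hcond⟩

theorem reach_step_of_subset {D R : DATE Q E Θ} (hsub : R.delta ⊆ D.delta) (s : Q × Θ)
    (e : E) : D.Reach s.1 (R.step s e).1 := by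
  unfold step
  split
  case isTrue h =>
    obtain ⟨hd, hsrc, hev, hcond⟩ := h.choose_spec
    exact reach_of_approxStep (hsrc ▸ hev ▸ approxStep_of_enabled (hsub hd) hcond)
  case isFalse => exact reach_refl D s.1

theorem reach_run_of_subset {D R : DATE Q E Θ} (hsub : R.delta ⊆ D.delta) (t : List E)
    (s : Q × Θ) : D.Reach s.1 (R.run s t).1 := by
  induction t generalizing s with
  | nil => exact reach_refl D s.1
  | cons e t ih => exact reach_trans (reach_step_of_subset hsub s e) (ih (R.step s e))

theorem run_not_mem_bad_of_subset {D R : DATE Q E Θ} (hsub : R.delta ⊆ D.delta) {s : Q × Θ}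
    (hs : ¬ ∃ q ∈ D.bad, D.Reach s.1 q) (t : List E) : (R.run s t).1 ∉ D.bad :=
  fun hbad => hs ⟨_, hbad, reach_run_of_subset hsub t s⟩

theorem useful_of_approxStep {D : DATE Q E Θ} {q q' : Q} {e : E} (hq : D.BadAfter q)
    (hstep : D.ApproxStep q e q') : D.Useful q' := by
  by_cases hq' : D.BadAfter q'
  · exact Or.inl hq'
  · exact Or.inr ⟨hq', q, e, hq, hstep⟩

theorem step_reachReduce_eq {D : DATE Q E Θ} (hdet : D.Deterministic) {s : Q × Θ} (e : E)
    (hs : D.BadAfter s.1) : D.reachReduce.step s e = D.step s e :=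
  step_restrict_eq hdet fun d hd hsrc hev hcond => by
    have hstep := approxStep_of_enabled hd hcond
    rw [hsrc, hev] at hstep
    exact ⟨hsrc ▸ Or.inl hs, useful_of_approxStep hs hstep⟩

theorem run_reachReduce_mem_bad_iff {D : DATE Q E Θ} (hdet : D.Deterministic) (t : List E)
    {s : Q × Θ} (hs : D.Reach D.init s.1) :
    (D.reachReduce.run s t).1 ∈ D.bad ↔ (D.run s t).1 ∈ D.bad := by
  induction t generalizing s with
  | nil => rfl
  | cons e t ih =>
    by_cases hbad : ∃ q ∈ D.bad, D.Reach s.1 q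
    · have hnext : D.Reach D.init (D.step s e).1 :=
        reach_trans hs (reach_step_of_subset subset_rfl s e)
      rw [run, List.foldl_cons, step_reachReduce_eq hdet e ⟨hs, hbad⟩]
      exact ih hnext
    · exact iff_of_false (run_not_mem_bad_of_subset Set.inter_subset_left hbad _)
        (run_not_mem_bad_of_subset subset_rfl hbad _)

theorem sat_reachReduce_iff {D : DATE Q E Θ} (hdet : D.Deterministic) (t : List E) :
    Sat t D.reachReduce ↔ Sat t D :=
  sat_restrict_iff fun t' _ => run_reachReduce_mem_bad_iff hdet t' (reach_refl D D.init)

theorem sEquiv_of_equivOn_projAll {α : Type*} {P : SProg α E} {D D' : DATE Q E Θ}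
    (h : EquivOn P.projAll D D') : SEquiv P D D' :=
  fun st hst => forall_congr' fun x => forall_congr' fun t => forall_congr' fun ht =>
    h t ⟨st, hst, x, ht⟩

end DATE

/-- The residual `residual₀(D) = reach(D ↾ Σ(P^S_Σ ⇓ OId))` is
equivalent to `D` with respect to the static program. -/
theorem residual0_equiv {α Q E Θ : Type*} (D : DATE Q E Θ)
    (hdet : D.Deterministic) (P : SProg α E) :
    DATE.SEquiv P ((D.alphaRestrict (DATE.eventsOf P.projAll)).reachReduce) D := by
  refine DATE.sEquiv_of_equivOn_projAll fun t ht => ?_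
  exact (DATE.sat_reachReduce_iff (hdet.restrict _) t).trans <| DATE.sat_alphaRestrict_iff hdet fun e he => ⟨t, ht, he⟩
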